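/- arXiv:2301.08005 — 2 statements merged into one kernel-verified Lean document; each statement's English description precedes it below -/
import Mathlib

section
/- Let L > 0 and let c: ℤ³ → ℂ satisfy Σ_{n ∈ ℤ³} |c_n| < ∞. Define γ: ℝ³ → ℂ by γ(x) = Σ_{n ∈ ℤ³} c_n e^{i (2π/L) n·x}. Then for every integer p ≥ 1 and all points z₁, …, z_p ∈ ℝ³, one has |det[ γ(z_i − z_j) ]_{1≤i,j≤p}| ≤ ( Σ_{n ∈ ℤ³} |c_n| )^p. -/
/-!
Write `e_n(x) = e^{i (2π/L) n·x}`, so that `γ(z_i - z_j) = Σ_n c_n e_n(z_i) conj(e_n(z_j))`.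
Truncated to a finite set `F` of frequencies, the matrix `[γ(z_i - z_j)]` is `X Yᴴ` with
`X_{in} = c_n |c_n|^{-1/2} e_n(z_i)` (read as `0` when `c_n = 0`) and
`Y_{jn} = |c_n|^{1/2} e_n(z_j)`, whose rows all have squared norm `Σ_{n ∈ F} |c_n|`. Factor `Y = R Z` with `Z` having orthonormal
rows; then `|det X Yᴴ|² = det (X Zᴴ)(X Zᴴ)ᴴ · det Y Yᴴ`. By AM–GM on the eigenvalues, a positive
semidefinite `p × p` matrix has determinant at most `(trace / p)^p`, and projecting the rows of `X`
onto the row space of `Z` does not increase the trace. Finally let `F` exhaust `ℤ³`; the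
determinant is continuous.
-/

open MeasureTheory

noncomputable section

/-- The `L`-periodic function `γ(x) = Σ_{n ∈ ℤ³} c_n e^{i(2π/L) n·x}`. -/
def periodicFn (L : ℝ) (c : (Fin 3 → ℤ) → ℂ) (x : Fin 3 → ℝ) : ℂ :=
  ∑' n : Fin 3 → ℤ, c n *
    Complex.exp (Complex.I * (((2 * Real.pi / L) * ∑ m : Fin 3, (n m : ℝ) * x m : ℝ) : ℂ))

theorem Real.prod_le_arith_mean_pow {ι : Type*} [Fintype ι] {f : ι → ℝ} (hf : ∀ i, 0 ≤ f i) :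
    ∏ i, f i ≤ ((∑ i, f i) / Fintype.card ι) ^ Fintype.card ι := by
  rcases isEmpty_or_nonempty ι with hι | hι
  · simp
  have hcard : (0 : ℝ) < Fintype.card ι := by exact_mod_cast Fintype.card_pos
  have amgm := Real.geom_mean_le_arith_mean Finset.univ (fun _ => 1) f (fun _ _ => zero_le_one)
    (by simpa using hcard) (fun i _ => hf i)
  simp only [Real.rpow_one, one_mul, Finset.sum_const, Finset.card_univ, nsmul_eq_mul,
    mul_one] at amgm
  calc ∏ i, f i = ((∏ i, f i) ^ (Fintype.card ι : ℝ)⁻¹) ^ Fintype.card ι := by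
        rw [← Real.rpow_natCast, ← Real.rpow_mul (Finset.prod_nonneg fun i _ => hf i),
          inv_mul_cancel₀ hcard.ne', Real.rpow_one]
    _ ≤ _ := by gcongr; exact Real.rpow_nonneg (Finset.prod_nonneg fun i _ => hf i) _

namespace Matrix

open scoped MatrixOrder ComplexOrder

variable {𝕜 ι κ m : Type*} [RCLike 𝕜] [Fintype ι] [Fintype m]

theorem re_trace_mul_conjTranspose (N : Matrix ι m 𝕜) :
    RCLike.re (N * Nᴴ).trace = ∑ i, ∑ n, ‖N i n‖ ^ 2 := by
  simp only [trace, diag_apply, mul_apply, conjTranspose_apply, map_sum, RCLike.star_def,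
    RCLike.mul_conj, ← RCLike.ofReal_pow, RCLike.ofReal_re]

variable [DecidableEq ι]

theorem PosSemidef.norm_det_le {A : Matrix ι ι 𝕜} (hA : A.PosSemidef) :
    ‖A.det‖ ≤ (RCLike.re A.trace / Fintype.card ι) ^ Fintype.card ι := by
  have hev := hA.eigenvalues_nonneg
  rw [hA.1.det_eq_prod_eigenvalues, hA.1.trace_eq_sum_eigenvalues, norm_prod]
  simp only [RCLike.norm_ofReal, abs_of_nonneg (hev _), map_sum, RCLike.ofReal_re]
  exact Real.prod_le_arith_mean_pow hev

theorem det_mul_conjTranspose_eq_zero (X Y : Matrix ι m 𝕜) (h : (Y * Yᴴ).det = 0) :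
    (X * Yᴴ).det = 0 := by
  obtain ⟨v, hv, hYv⟩ := exists_mulVec_eq_zero_iff.mpr h
  refine exists_mulVec_eq_zero_iff.mp ⟨v, hv, ?_⟩
  rw [← mulVec_mulVec, (self_mul_conjTranspose_mulVec_eq_zero Y v).mp hYv, mulVec_zero]

theorem exists_eq_mul_and_mul_conjTranspose_eq_one (Y : Matrix ι m 𝕜) (h : (Y * Yᴴ).det ≠ 0) :
    ∃ (R : Matrix ι ι 𝕜) (Z : Matrix ι m 𝕜), Y = R * Z ∧ Z * Zᴴ = 1 := by
  set R := CFC.sqrt (Y * Yᴴ)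
  have hRH : Rᴴ = R := (nonneg_iff_posSemidef.mp (CFC.sqrt_nonneg _)).isHermitian.eq
  have hRR : R * R = Y * Yᴴ :=
    CFC.sqrt_mul_sqrt_self _ (posSemidef_self_mul_conjTranspose Y).nonneg
  have hR : IsUnit R.det :=
    isUnit_iff_ne_zero.mpr fun h0 => h (by rw [← hRR, det_mul, h0, zero_mul])
  refine ⟨R, R⁻¹ * Y, by rw [← Matrix.mul_assoc, mul_nonsing_inv R hR, Matrix.one_mul], ?_⟩
  rw [conjTranspose_mul, conjTranspose_nonsing_inv, hRH]
  calc R⁻¹ * Y * (Yᴴ * R⁻¹) = R⁻¹ * (R * R) * R⁻¹ := by rw [hRR]; simp only [Matrix.mul_assoc]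
    _ = 1 := by
      rw [← Matrix.mul_assoc R⁻¹ R R, nonsing_inv_mul R hR, Matrix.one_mul, mul_nonsing_inv R hR]

theorem re_trace_mul_conjTranspose_le_of_mul_conjTranspose_eq_one [Fintype κ]
    {Z : Matrix ι m 𝕜} (hZ : Z * Zᴴ = 1) (X : Matrix κ m 𝕜) :
    RCLike.re ((X * Zᴴ) * (X * Zᴴ)ᴴ).trace ≤ RCLike.re (X * Xᴴ).trace := by
  set P := Zᴴ * Z
  have hP : P * P = P := by rw [Matrix.mul_assoc, ← Matrix.mul_assoc Z, hZ, Matrix.one_mul]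
  have hXPH : (X * P)ᴴ = P * Xᴴ := by
    rw [conjTranspose_mul, conjTranspose_mul, conjTranspose_conjTranspose]
  have hsplit : X * Xᴴ = (X * Zᴴ) * (X * Zᴴ)ᴴ + (X - X * P) * (X - X * P)ᴴ := by
    rw [conjTranspose_sub, hXPH, Matrix.sub_mul, Matrix.mul_sub, Matrix.mul_sub,
      ← Matrix.mul_assoc (X * P) P, Matrix.mul_assoc X P P, hP, conjTranspose_mul,
      conjTranspose_conjTranspose, Matrix.mul_assoc X Zᴴ, ← Matrix.mul_assoc Zᴴ,
      ← Matrix.mul_assoc X P]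
    abel
  rw [hsplit, trace_add, map_add, le_add_iff_nonneg_right, re_trace_mul_conjTranspose]
  positivity

theorem norm_det_mul_conjTranspose_self (N : Matrix ι ι 𝕜) : ‖(N * Nᴴ).det‖ = ‖N.det‖ ^ 2 := by
  rw [det_mul, det_conjTranspose, norm_mul, norm_star, sq]

theorem norm_det_mul_conjTranspose_sq_le (X Y : Matrix ι m 𝕜) :
    ‖(X * Yᴴ).det‖ ^ 2 ≤ (RCLike.re (X * Xᴴ).trace / Fintype.card ι) ^ Fintype.card ι *
      (RCLike.re (Y * Yᴴ).trace / Fintype.card ι) ^ Fintype.card ι := by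
  by_cases hY : (Y * Yᴴ).det = 0
  · rw [det_mul_conjTranspose_eq_zero X Y hY, norm_zero, zero_pow two_ne_zero,
      re_trace_mul_conjTranspose, re_trace_mul_conjTranspose]
    positivity
  obtain ⟨R, Z, rfl, hZ⟩ := exists_eq_mul_and_mul_conjTranspose_eq_one Y hY
  have hX : ‖((X * Zᴴ) * (X * Zᴴ)ᴴ).det‖ ≤
      (RCLike.re (X * Xᴴ).trace / Fintype.card ι) ^ Fintype.card ι :=
    (posSemidef_self_mul_conjTranspose _).norm_det_le.trans
      (by
        gcongr (?_ / _) ^ _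
        · rw [re_trace_mul_conjTranspose]; positivity
        · exact re_trace_mul_conjTranspose_le_of_mul_conjTranspose_eq_one hZ X)
  have hRZ : R * Z * (R * Z)ᴴ = R * Rᴴ := by
    rw [conjTranspose_mul, Matrix.mul_assoc, ← Matrix.mul_assoc Z, hZ, Matrix.one_mul]
  calc ‖(X * (R * Z)ᴴ).det‖ ^ 2
      = ‖((X * Zᴴ) * (X * Zᴴ)ᴴ).det‖ * ‖(R * Z * (R * Z)ᴴ).det‖ := by
        rw [hRZ, norm_det_mul_conjTranspose_self, norm_det_mul_conjTranspose_self,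
          conjTranspose_mul, ← Matrix.mul_assoc, det_mul, det_conjTranspose, norm_mul, norm_star,
          mul_pow]
    _ ≤ _ := mul_le_mul hX (posSemidef_self_mul_conjTranspose _).norm_det_le (norm_nonneg _)
      (by rw [re_trace_mul_conjTranspose]; positivity)

theorem norm_det_sum_mul_star_le (a : m → 𝕜) (u : ι → m → 𝕜) (hu : ∀ i n, ‖u i n‖ = 1) :
    ‖(of fun i j => ∑ n, a n * (u i n * star (u j n))).det‖ ≤ (∑ n, ‖a n‖) ^ Fintype.card ι := by
  set X : Matrix ι m 𝕜 := of fun i n => a n / (√‖a n‖ : 𝕜) * u i n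
  set Y : Matrix ι m 𝕜 := of fun i n => (√‖a n‖ : 𝕜) * u i n
  have hXY : (of fun i j => ∑ n, a n * (u i n * star (u j n))) = X * Yᴴ := by
    ext i j
    simp only [X, Y, of_apply, mul_apply, conjTranspose_apply, star_mul', RCLike.star_def,
      RCLike.conj_ofReal]
    refine Finset.sum_congr rfl fun n _ => ?_
    have hsqrt : a n / (√‖a n‖ : 𝕜) * (√‖a n‖ : 𝕜) = a n :=
      div_mul_cancel_of_imp fun h => by simpa using h
    linear_combination (-(u i n * (starRingEnd 𝕜) (u j n))) * hsqrt
  have hX : ∀ i n, ‖X i n‖ ^ 2 = ‖a n‖ := fun i n => by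
    simp only [X, of_apply, norm_mul, norm_div, hu, mul_one, RCLike.norm_ofReal,
      abs_of_nonneg (Real.sqrt_nonneg _), sq]
    rw [div_mul_div_comm, Real.mul_self_sqrt (norm_nonneg _), mul_self_div_self]
  have hY : ∀ i n, ‖Y i n‖ ^ 2 = ‖a n‖ := fun i n => by
    simp only [Y, of_apply, norm_mul, hu, mul_one, RCLike.norm_ofReal,
      abs_of_nonneg (Real.sqrt_nonneg _), Real.sq_sqrt (norm_nonneg _)]
  have hmean : ∀ N : Matrix ι m 𝕜, (∀ i n, ‖N i n‖ ^ 2 = ‖a n‖) →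
      (RCLike.re (N * Nᴴ).trace / Fintype.card ι) ^ Fintype.card ι =
        (∑ n, ‖a n‖) ^ Fintype.card ι := by
    intro N hN
    rcases Nat.eq_zero_or_pos (Fintype.card ι) with h0 | hpos
    · simp [h0]
    simp only [re_trace_mul_conjTranspose, hN, Finset.sum_const, Finset.card_univ, nsmul_eq_mul]
    rw [mul_div_cancel_left₀ _ (by positivity)]
  have hsq := norm_det_mul_conjTranspose_sq_le X Y
  rw [hmean X hX, hmean Y hY, ← sq] at hsq
  rw [hXY]
  exact (pow_le_pow_iff_left₀ (norm_nonneg _) (by positivity) two_ne_zero).mp hsq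

theorem tendsto_det_of_hasSum {α R : Type*} [CommRing R] [TopologicalSpace R]
    [IsTopologicalRing R] {f : ι → ι → α → R} {A : Matrix ι ι R}
    (hf : ∀ i j, HasSum (f i j) (A i j)) :
    Filter.Tendsto (fun s : Finset α => (of fun i j => ∑ n ∈ s, f i j n).det) Filter.atTop
      (nhds A.det) :=
  (continuous_id.matrix_det.tendsto A).comp
    (tendsto_pi_nhds.mpr fun i => tendsto_pi_nhds.mpr (hf i))

end Matrix

def planeWave {d : ℕ} (L : ℝ) (n : Fin d → ℤ) (x : Fin d → ℝ) : ℂ :=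
  Complex.exp (Complex.I * (((2 * Real.pi / L) * ∑ m : Fin d, (n m : ℝ) * x m : ℝ) : ℂ))

theorem norm_planeWave {d : ℕ} (L : ℝ) (n : Fin d → ℤ) (x : Fin d → ℝ) :
    ‖planeWave L n x‖ = 1 :=
  Complex.norm_exp_I_mul_ofReal _

theorem planeWave_sub {d : ℕ} (L : ℝ) (n : Fin d → ℤ) (x y : Fin d → ℝ) :
    planeWave L n (x - y) = planeWave L n x * starRingEnd ℂ (planeWave L n y) := by
  simp only [planeWave, ← Complex.exp_conj, map_mul, Complex.conj_I, Complex.conj_ofReal,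
    ← Complex.exp_add, Pi.sub_apply, mul_sub, Finset.sum_sub_distrib]
  congr 1
  push_cast
  ring

theorem det_periodicFn_bound_general
    (L : ℝ) (c : (Fin 3 → ℤ) → ℂ)
    (hc : Summable fun n => ‖c n‖) :
    ∀ p : ℕ, 1 ≤ p → ∀ z : Fin p → (Fin 3 → ℝ),
      ‖Matrix.det (Matrix.of fun i j : Fin p => periodicFn L c (z i - z j))‖
        ≤ (∑' n : Fin 3 → ℤ, ‖c n‖) ^ p := by
  intro p _ z
  have hsum : ∀ i j,
      HasSum (fun n => c n * planeWave L n (z i - z j)) (periodicFn L c (z i - z j)) :=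
    fun i j => Summable.hasSum <| .of_norm <| by simpa [norm_planeWave] using hc
  refine le_of_tendsto (Matrix.tendsto_det_of_hasSum hsum).norm
    (Filter.Eventually.of_forall fun s => ?_)
  calc _ = ‖(Matrix.of fun i j =>
          ∑ n : s, c n * (planeWave L n (z i) * star (planeWave L n (z j)))).det‖ := by
        simp only [planeWave_sub, Complex.star_def]
        congr 3 with i j
        exact (Finset.sum_coe_sort s _).symm
    _ ≤ (∑ n : s, ‖c n‖) ^ Fintype.card (Fin p) :=
        Matrix.norm_det_sum_mul_star_le _ _ fun i n => norm_planeWave _ _ _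
    _ ≤ _ := by
        rw [Finset.sum_coe_sort s fun n => ‖c n‖, Fintype.card_fin]
        gcongr
        exact hc.sum_le_tsum s fun n _ => norm_nonneg _

/-- Gram–Hadamard bound: if `γ` has absolutely summable Fourier coefficients
`c`, then `|det[γ(z_i − z_j)]_{1≤i,j≤p}| ≤ (Σ_n |c_n|)^p` for all `p ≥ 1` and all points
`z₁,…,z_p ∈ ℝ³`. -/
theorem det_periodicFn_bound
    (L : ℝ) (hL : 0 < L) (c : (Fin 3 → ℤ) → ℂ)
    (hc : Summable fun n => ‖c n‖) :
    ∀ p : ℕ, 1 ≤ p → ∀ z : Fin p → (Fin 3 → ℝ),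
      ‖Matrix.det (Matrix.of fun i j : Fin p => periodicFn L c (z i - z j))‖
        ≤ (∑' n : Fin 3 → ℤ, ‖c n‖) ^ p :=
  det_periodicFn_bound_general L c hc
end
end

section
/- There exists a universal constant C > 0 such that the following holds. Let a, b > 0 with 2a ≤ b, and let f: [0, b] → ℝ be continuously differentiable with f ≥ 0, f(b) = 1, and f(r) ≥ (1 − a/r)/(1 − a/b) for all r ∈ [a, b]. Then ∫₀^b r² f(r) f'(r) dr ≤ C a b. -/
/-!
Integrating by parts, `∫₀^b r² f f' = b²/2 - ∫₀^b r f²`. On `[a, b]` the lower bound gives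
`f(r) ≥ 1 - a/r ≥ 0`, hence `r f(r)² ≥ (r - a)²/r ≥ r - 2a`. Integrating over `[a, b]` and
dropping the nonnegative part over `[0, a]` bounds the integral by
`b²/2 - (b - a)(b - 3a)/2 = 2ab - 3a²/2 ≤ 2ab`.
-/

open MeasureTheory intervalIntegral Set

theorem integral_sq_mul_mul_deriv {f f' : ℝ → ℝ} {c d : ℝ}
    (hf : ∀ r ∈ uIcc c d, HasDerivAt f (f' r) r) (hf' : IntervalIntegrable f' volume c d) :
    ∫ r in c..d, r ^ 2 * f r * f' r =
      (d ^ 2 * f d ^ 2 - c ^ 2 * f c ^ 2) / 2 - ∫ r in c..d, r * f r ^ 2 := by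
  have hfc : ContinuousOn f (uIcc c d) := fun r hr => (hf r hr).continuousAt.continuousWithinAt
  have hsq : ∀ r ∈ uIcc c d, HasDerivAt (fun x => f x ^ 2 / 2) (f r * f' r) r := fun r hr =>
    (((hf r hr).pow 2).div_const 2).congr_deriv (by ring)
  have hibp := integral_mul_deriv_eq_deriv_mul (u := fun x => x ^ 2) (u' := fun x => 2 * x)
    (fun r _ => by simpa using hasDerivAt_pow 2 r) hsq
    ((continuous_const.mul continuous_id).intervalIntegrable c d) (hf'.continuousOn_mul hfc)
  have hJ : ∫ r in c..d, 2 * r * (f r ^ 2 / 2) = ∫ r in c..d, r * f r ^ 2 :=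
    integral_congr fun r _ => by ring
  simp only [mul_assoc]
  rw [hibp, hJ]
  ring

theorem sub_two_mul_le_mul_sq {a r x : ℝ} (hr : 0 < r) (har : a ≤ r) (hx : 1 - a / r ≤ x) :
    r - 2 * a ≤ r * x ^ 2 := by
  have hrx : r - a ≤ r * x := by
    have := mul_le_mul_of_nonneg_left hx hr.le
    rwa [mul_sub, mul_one, mul_div_cancel₀ _ hr.ne'] at this
  nlinarith [mul_self_le_mul_self (sub_nonneg.2 har) hrx, sq_nonneg a]

theorem le_integral_mul_sq_of_one_sub_div_le {f : ℝ → ℝ} {a b : ℝ} (ha : 0 < a) (hab : a ≤ b)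
    (hf : ContinuousOn f (Icc a b)) (hlow : ∀ r ∈ Icc a b, 1 - a / r ≤ f r) :
    (b - a) * (b - 3 * a) / 2 ≤ ∫ r in a..b, r * f r ^ 2 :=
  calc (b - a) * (b - 3 * a) / 2 = ∫ r in a..b, (r - 2 * a) := by
        rw [intervalIntegral.integral_sub intervalIntegrable_id intervalIntegrable_const]
        simp only [integral_id, intervalIntegral.integral_const_mul,
          intervalIntegral.integral_const, smul_eq_mul]
        ring
    _ ≤ ∫ r in a..b, r * f r ^ 2 :=
      integral_mono_on hab (intervalIntegrable_id.sub intervalIntegrable_const)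
        ((continuousOn_id.mul (hf.pow 2)).intervalIntegrable_of_Icc hab)
        fun r hr => sub_two_mul_le_mul_sq (ha.trans_le hr.1) hr.1 (hlow r hr)

theorem one_sub_div_le_one_sub_div_div {a b r : ℝ} (ha : 0 < a) (hab : a < b) (har : a ≤ r) :
    1 - a / r ≤ (1 - a / r) / (1 - a / b) :=
  le_div_self (sub_nonneg.2 (div_le_one_of_le₀ har (ha.trans_le har).le))
    (sub_pos.2 ((div_lt_one (ha.trans hab)).2 hab))
    (sub_le_self _ (div_nonneg ha.le (ha.trans hab).le))

/-- There is a universal constant `C > 0` such that for all `0 < a`,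
`0 < b` with `2a ≤ b` and every continuously differentiable `f : [0,b] → ℝ` (with derivative
`f'`) satisfying `f ≥ 0`, `f(b) = 1` and `f(r) ≥ (1 − a/r)/(1 − a/b)` on `[a,b]`, one has
`∫₀^b r² f(r) f'(r) dr ≤ C a b`. -/
theorem radial_integral_f_deriv_le_s_wave :
    ∃ C > (0 : ℝ), ∀ (a b : ℝ) (f f' : ℝ → ℝ),
      0 < a → 0 < b → 2 * a ≤ b →
      (∀ r ∈ Set.Icc (0 : ℝ) b, HasDerivAt f (f' r) r) →
      ContinuousOn f' (Set.Icc (0 : ℝ) b) →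
      (∀ r ∈ Set.Icc (0 : ℝ) b, 0 ≤ f r) →
      f b = 1 →
      (∀ r ∈ Set.Icc a b, (1 - a / r) / (1 - a / b) ≤ f r) →
      (∫ r in (0 : ℝ)..b, r ^ 2 * f r * f' r) ≤ C * a * b := by
  refine ⟨2, two_pos, fun a b f f' ha hb hab hf hf' _ hfb hlow => ?_⟩
  have hfc : ContinuousOn f (Icc 0 b) := fun r hr => (hf r hr).continuousAt.continuousWithinAt
  have htail : ∫ r in a..b, r * f r ^ 2 ≤ ∫ r in (0 : ℝ)..b, r * f r ^ 2 :=
    integral_mono_interval ha.le (by linarith) le_rfl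
      (ae_restrict_of_forall_mem measurableSet_Ioc fun r hr => by have := hr.1.le; positivity)
      ((continuousOn_id.mul (hfc.pow 2)).intervalIntegrable_of_Icc hb.le)
  have hbulk := le_integral_mul_sq_of_one_sub_div_le ha (by linarith)
    (hfc.mono (Icc_subset_Icc_left ha.le))
    fun r hr => (one_sub_div_le_one_sub_div_div ha (by linarith) hr.1).trans (hlow r hr)
  rw [integral_sq_mul_mul_deriv (uIcc_of_le hb.le ▸ hf) (hf'.intervalIntegrable_of_Icc hb.le), hfb]
  nlinarith
end
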